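/- For every integer n, the group with presentation on four generators a₁, b₁, a₂, b₂ with the nine relators b₁a₁ⁿ, b₁b₂a₁^{n+1}b₁b₂b₁⁻¹a₁⁻¹, b₁b₂a₁b₂⁻¹b₁⁻¹a₁⁻¹, b₁b₂a₂b₂⁻¹a₁^{n+1}, b₂a₂⁻¹[a₁,b₁]⁻¹a₁⁻¹, [a₁,b₁], b₁b₂a₂a₂, b₁b₂a₂b₂⁻¹a₁⁻¹a₂a₁, and a₁⁻¹a₂⁻¹a₁b₂a₂b₂⁻¹ is isomorphic to ℤ/(n+2)ℤ; in particular it is trivial when n = −3 or n = −1, infinite cyclic when n = −2, and cyclic of order |n+2| when n ∉ {−3, −2, −1}. -/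
import Mathlib


/-!
For every integer n, the group presented on a₁, b₁, a₂, b₂ with the nine relators
b₁a₁ⁿ, b₁b₂a₁^{n+1}b₁b₂b₁⁻¹a₁⁻¹, b₁b₂a₁b₂⁻¹b₁⁻¹a₁⁻¹, b₁b₂a₂b₂⁻¹a₁^{n+1},
b₂a₂⁻¹[a₁,b₁]⁻¹a₁⁻¹, [a₁,b₁], b₁b₂a₂a₂, b₁b₂a₂b₂⁻¹a₁⁻¹a₂a₁, a₁⁻¹a₂⁻¹a₁b₂a₂b₂⁻¹
is isomorphic to ℤ/(n+2)ℤ, interpreted as ZMod (n+2).natAbs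
(so ℤ when n = −2, trivial when n = −3 or n = −1, cyclic of order |n+2| otherwise).
Generators: a₁ = 0, b₁ = 1, a₂ = 2, b₂ = 3.
-/

namespace Stmt5

def a₁ : FreeGroup (Fin 4) := FreeGroup.of 0
def b₁ : FreeGroup (Fin 4) := FreeGroup.of 1
def a₂ : FreeGroup (Fin 4) := FreeGroup.of 2
def b₂ : FreeGroup (Fin 4) := FreeGroup.of 3

def rels (n : ℤ) : Set (FreeGroup (Fin 4)) :=
  { b₁ * a₁ ^ n,
    b₁ * b₂ * a₁ ^ (n + 1) * b₁ * b₂ * b₁⁻¹ * a₁⁻¹,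
    b₁ * b₂ * a₁ * b₂⁻¹ * b₁⁻¹ * a₁⁻¹,
    b₁ * b₂ * a₂ * b₂⁻¹ * a₁ ^ (n + 1),
    b₂ * a₂⁻¹ * (a₁ * b₁ * a₁⁻¹ * b₁⁻¹)⁻¹ * a₁⁻¹,
    a₁ * b₁ * a₁⁻¹ * b₁⁻¹,
    b₁ * b₂ * a₂ * a₂,
    b₁ * b₂ * a₂ * b₂⁻¹ * a₁⁻¹ * a₂ * a₁,
    a₁⁻¹ * a₂⁻¹ * a₁ * b₂ * a₂ * b₂⁻¹ }

theorem pi1_X_theta_n (n : ℤ) :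
    Nonempty (PresentedGroup (rels n) ≃* Multiplicative (ZMod (n + 2).natAbs)) := by
  -- notation
  set m : ℕ := (n + 2).natAbs with hmdef
  set π : FreeGroup (Fin 4) →* PresentedGroup (rels n) := PresentedGroup.mk (rels n) with hπ
  set x : PresentedGroup (rels n) := π a₁ with hxdef
  set b : PresentedGroup (rels n) := π b₁ with hbdef
  set c : PresentedGroup (rels n) := π a₂ with hcdef
  set d : PresentedGroup (rels n) := π b₂ with hddef
  have key : ∀ r ∈ rels n, π r = 1 := fun r hr =>
    (QuotientGroup.eq_one_iff r).mpr (Subgroup.subset_normalClosure hr)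
  have mem1 : b₁ * a₁ ^ n ∈ rels n := Set.mem_insert _ _
  have mem4 : b₁ * b₂ * a₂ * b₂⁻¹ * a₁ ^ (n + 1) ∈ rels n :=
    Set.mem_insert_of_mem _ (Set.mem_insert_of_mem _ (Set.mem_insert_of_mem _
      (Set.mem_insert _ _)))
  have mem5 : b₂ * a₂⁻¹ * (a₁ * b₁ * a₁⁻¹ * b₁⁻¹)⁻¹ * a₁⁻¹ ∈ rels n :=
    Set.mem_insert_of_mem _ (Set.mem_insert_of_mem _ (Set.mem_insert_of_mem _
      (Set.mem_insert_of_mem _ (Set.mem_insert _ _))))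
  have mem8 : b₁ * b₂ * a₂ * b₂⁻¹ * a₁⁻¹ * a₂ * a₁ ∈ rels n :=
    Set.mem_insert_of_mem _ (Set.mem_insert_of_mem _ (Set.mem_insert_of_mem _
      (Set.mem_insert_of_mem _ (Set.mem_insert_of_mem _ (Set.mem_insert_of_mem _
        (Set.mem_insert_of_mem _ (Set.mem_insert _ _)))))))
  -- the individual relations
  have h1 : b * x ^ n = 1 := by
    have := key _ mem1
    simpa [map_mul, map_zpow] using this
  have h4 : b * d * c * d⁻¹ * x ^ (n + 1) = 1 := by
    have := key _ mem4
    simpa [map_mul, map_zpow, map_inv] using this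
  have h5 : d * c⁻¹ * (x * b * x⁻¹ * b⁻¹)⁻¹ * x⁻¹ = 1 := by
    have := key _ mem5
    simpa [map_mul, map_inv] using this
  have h8 : b * d * c * d⁻¹ * x⁻¹ * c * x = 1 := by
    have := key _ mem8
    simpa [map_mul, map_inv] using this
  -- consequences
  have hb : b = x ^ (-n) := by
    rw [zpow_neg]; exact eq_inv_of_mul_eq_one_left h1
  have e4 : b * d * c * d⁻¹ = (x ^ (n + 1))⁻¹ := eq_inv_of_mul_eq_one_left h4
  have e8 : b * d * c * d⁻¹ = x⁻¹ * c⁻¹ * x := by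
    rw [← one_mul (x⁻¹ * c⁻¹ * x), ← h8]; group
  have hc : c = x ^ (n + 1) := by
    have h := e8.symm.trans e4
    calc c = x * (x⁻¹ * c⁻¹ * x)⁻¹ * x⁻¹ := by group
      _ = x * ((x ^ (n + 1))⁻¹)⁻¹ * x⁻¹ := by rw [h]
      _ = x ^ (n + 1) := by group
  have hd : d = x * c := by
    rw [hb] at h5
    calc d = (d * c⁻¹ * (x * x ^ (-n) * x⁻¹ * (x ^ (-n))⁻¹)⁻¹ * x⁻¹) * (x * c) := by group
      _ = 1 * (x * c) := by rw [h5]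
      _ = x * c := one_mul _
  have hd2 : d = x ^ (n + 2) := by rw [hd, hc]; group
  have hx : x ^ (n + 2) = 1 := by
    rw [hb, hd2, hc] at e4
    calc x ^ (n + 2)
        = (x ^ (-n) * x ^ (n + 2) * x ^ (n + 1) * (x ^ (n + 2))⁻¹) * x ^ (n + 1) := by group
      _ = (x ^ (n + 1))⁻¹ * x ^ (n + 1) := by rw [e4]
      _ = 1 := by group
  have hc' : c = x ^ (-1 : ℤ) := by
    calc c = x ^ (n + 2) * x ^ (-1 : ℤ) := by rw [hc]; group
      _ = x ^ (-1 : ℤ) := by rw [hx, one_mul]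
  have hd1 : d = 1 := by rw [hd2, hx]
  have hxm : x ^ ((m : ℤ)) = 1 := by
    rcases Int.natAbs_eq (n + 2) with h | h
    · rw [← h] at *; exact hx
    · have : ((m : ℤ)) = -(n + 2) := by omega
      rw [this, zpow_neg, hx, inv_one]
  -- target side
  set u : Multiplicative (ZMod m) := Multiplicative.ofAdd 1 with hudef
  have hu' : ∀ k : ℤ, Multiplicative.ofAdd ((k : ZMod m)) = u ^ k := by
    intro k
    rw [← ofAdd_toAdd (u ^ k), toAdd_zpow]
    congr 1
    show ((k : ZMod m)) = k • (1 : ZMod m)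
    rw [zsmul_eq_mul, mul_one]
  have hu : u ^ (n + 2 : ℤ) = 1 := by
    rw [← hu']
    have h0 : ((n + 2 : ℤ) : ZMod m) = 0 :=
      (ZMod.intCast_zmod_eq_zero_iff_dvd _ _).mpr (Int.natAbs_dvd.mpr dvd_rfl)
    rw [h0, ofAdd_zero]
  have hu2 : u ^ (-(n + 2) : ℤ) = 1 := by rw [zpow_neg, hu, inv_one]
  set f : Fin 4 → Multiplicative (ZMod m) :=
    ![Multiplicative.ofAdd (((1 : ℤ) : ZMod m)),
      Multiplicative.ofAdd (((-n : ℤ) : ZMod m)),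
      Multiplicative.ofAdd (((-1 : ℤ) : ZMod m)),
      Multiplicative.ofAdd (((0 : ℤ) : ZMod m))] with hfdef
  have f0 : f 0 = u ^ (1 : ℤ) := hu' 1
  have f1 : f 1 = u ^ (-n : ℤ) := hu' (-n)
  have f2 : f 2 = u ^ (-1 : ℤ) := hu' (-1)
  have f3 : f 3 = u ^ (0 : ℤ) := hu' 0
  have hrels : ∀ r ∈ rels n, FreeGroup.lift f r = 1 := by
    intro r hr
    simp only [rels, Set.mem_insert_iff, Set.mem_singleton_iff] at hr
    rcases hr with rfl | rfl | rfl | rfl | rfl | rfl | rfl | rfl | rfl <;>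
      simp only [a₁, b₁, a₂, b₂, map_mul, map_zpow, map_inv, FreeGroup.lift_apply_of,
        f0, f1, f2, f3] <;>
      (group <;> try (rw [show (-2 - n : ℤ) = -(n + 2) by ring]; exact hu2))
  set φ : PresentedGroup (rels n) →* Multiplicative (ZMod m) :=
    PresentedGroup.toGroup hrels with hφdef
  have hφx : φ x = u ^ (1 : ℤ) := by
    rw [hxdef, hπ]
    exact (PresentedGroup.toGroup.of hrels).trans f0
  have hφpow : ∀ k : ℤ, φ (x ^ k) = u ^ k := by
    intro k; rw [map_zpow, hφx, ← zpow_mul, one_mul]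
  -- inverse homomorphism
  have hFm : ((m : ℤ)) • Additive.ofMul x = 0 := by
    rw [← ofMul_zpow, hxm]; rfl
  set ψ : Multiplicative (ZMod m) →* PresentedGroup (rels n) :=
    AddMonoidHom.toMultiplicativeLeft
      (ZMod.lift m ⟨zmultiplesHom _ (Additive.ofMul x), hFm⟩) with hψdef
  have hψ : ∀ k : ℤ, ψ (Multiplicative.ofAdd ((k : ZMod m))) = x ^ k := by
    intro k
    show Additive.toMul
        ((ZMod.lift m ⟨zmultiplesHom _ (Additive.ofMul x), hFm⟩) ((k : ZMod m))) = x ^ k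
    rw [ZMod.lift_coe]
    show Additive.toMul (k • Additive.ofMul x) = x ^ k
    rw [← ofMul_zpow]
    rfl
  have hright : ∀ z : Multiplicative (ZMod m), φ (ψ z) = z := by
    intro z
    obtain ⟨k, hk⟩ := ZMod.intCast_surjective (n := m) (Multiplicative.toAdd z)
    have hz : Multiplicative.ofAdd ((k : ZMod m)) = z := by rw [hk]; exact ofAdd_toAdd z
    rw [← hz, hψ, hφpow, ← hu']
  have hof0 : (PresentedGroup.of (rels := rels n) 0) = x := by rw [hxdef]; rfl
  have hof1 : (PresentedGroup.of (rels := rels n) 1) = b := by rw [hbdef]; rfl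
  have hof2 : (PresentedGroup.of (rels := rels n) 2) = c := by rw [hcdef]; rfl
  have hof3 : (PresentedGroup.of (rels := rels n) 3) = d := by rw [hddef]; rfl
  have hcomp : ψ.comp φ = MonoidHom.id (PresentedGroup (rels n)) := by
    apply PresentedGroup.ext
    intro i
    simp only [MonoidHom.comp_apply, MonoidHom.id_apply, hφdef, PresentedGroup.toGroup.of]
    fin_cases i
    · exact (hψ 1).trans (zpow_one x)
    · exact (hψ (-n)).trans hb.symm
    · exact (hψ (-1)).trans hc'.symm
    · exact (hψ 0).trans ((zpow_zero x).trans hd1.symm)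
  exact ⟨{ toFun := φ, invFun := ψ,
           left_inv := fun p => DFunLike.congr_fun hcomp p,
           right_inv := hright,
           map_mul' := map_mul φ }⟩

end Stmt5
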